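/- Let S be a semigroup with exactly n minimal left ideals, where 2 ≤ n < ∞. Then the clique number of the intersection ideal graph Γ(S) equals n if and only if one of the following holds: (i) n = 3 and S = I₁ ∪ I₂ ∪ I₃, where I₁, I₂, I₃ are the three minimal left ideals of S; or (ii) n = 2, and S has exactly two minimal left ideals I₁, I₂ together with a unique maximal left ideal, namely I₁ ∪ I₂. -/

import Mathlib

/-- `I` is a left ideal of the semigroup `S`: a nonempty subset closed under
left multiplication by arbitrary elements of `S`. -/
def IsLeftIdeal (S : Type*) [Semigroup S] (I : Set S) : Prop :=
  I.Nonempty ∧ ∀ s : S, ∀ x ∈ I, s * x ∈ I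

/-- `I` is a nontrivial left ideal of `S`: a left ideal with `I ≠ S`. -/
def IsNontrivialLeftIdeal (S : Type*) [Semigroup S] (I : Set S) : Prop :=
  IsLeftIdeal S I ∧ I ≠ Set.univ

/-- `I` is a minimal left ideal of `S`: a nontrivial left ideal properly
containing no left ideal of `S`. -/
def IsMinimalLeftIdeal (S : Type*) [Semigroup S] (I : Set S) : Prop :=
  IsNontrivialLeftIdeal S I ∧ ∀ J : Set S, IsLeftIdeal S J → ¬ J ⊂ I

/-- `I` is a maximal left ideal of `S`: a nontrivial left ideal not properly
contained in any nontrivial left ideal of `S`. -/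
def IsMaximalLeftIdeal (S : Type*) [Semigroup S] (I : Set S) : Prop :=
  IsNontrivialLeftIdeal S I ∧ ∀ J : Set S, IsNontrivialLeftIdeal S J → ¬ I ⊂ J

/-- The intersection ideal graph `Γ(S)`: vertices are the nontrivial left ideals of `S`,
two distinct vertices being adjacent iff their intersection is nonempty. -/
def idealGraph (S : Type*) [Semigroup S] :
    SimpleGraph {I : Set S // IsNontrivialLeftIdeal S I} where
  Adj I J := I ≠ J ∧ (I.1 ∩ J.1).Nonempty
  symm := by
    refine ⟨?_⟩
    rintro I J ⟨h1, h2⟩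
    exact ⟨h1.symm, by rwa [Set.inter_comm]⟩
  loopless := by refine ⟨?_⟩; rintro I ⟨h1, -⟩; exact h1 rfl

/-- The clique number of `Γ(S)`: the supremum of cardinalities of sets of pairwise
adjacent vertices. -/
noncomputable def cliqueNumber (S : Type*) [Semigroup S] : ℕ∞ :=
  sSup {k : ℕ∞ | ∃ C : Set {I : Set S // IsNontrivialLeftIdeal S I},
    (idealGraph S).IsClique C ∧ C.encard = k}

/-!
Minimal left ideals are pairwise disjoint, and a minimal left ideal lies in every left ideal it
meets. Hence `T ↦ ⋃ T` identifies the nonempty sets `T` of minimal left ideals with the left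
ideals contained in the union `U` of all of them, and two such ideals meet iff the index sets do.
An intersecting family of subsets of an `n`-set has at most `2 ^ (n - 1)` members (it is disjoint
from the family of complements), and the star of a point attains this. So `ω = 2 ^ (n - 1) - 1`
if `U = S` (the whole index set is then excluded), `ω = 2 ^ (n - 1)` if `U ≠ S` and every
nontrivial left ideal lies in `U`, and otherwise an ideal outside `U` meeting the centre of the
star gives `ω ≥ 2 ^ (n - 1) + 1`. Comparing with `n` leaves `n = 3` with `U = S`, and `n = 2`
with every nontrivial left ideal inside `U`, i.e. `U` the unique maximal left ideal.
-/

open Set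

theorem Nat.two_pow_pred_sub_one_eq_self_iff {n : ℕ} (hn : 2 ≤ n) :
    2 ^ (n - 1) - 1 = n ↔ n = 3 := by
  refine ⟨fun h => ?_, by rintro rfl; rfl⟩
  obtain ⟨m, rfl⟩ := Nat.exists_eq_add_of_le' hn
  have := Nat.lt_two_pow_self (n := m)
  rw [show m + 2 - 1 = m + 1 by omega, pow_succ] at h
  omega

theorem Nat.two_pow_pred_eq_self_iff {n : ℕ} (hn : 2 ≤ n) : 2 ^ (n - 1) = n ↔ n = 2 := by
  refine ⟨fun h => ?_, by rintro rfl; rfl⟩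
  obtain ⟨m, rfl⟩ := Nat.exists_eq_add_of_le' hn
  have := Nat.lt_two_pow_self (n := m)
  rw [show m + 2 - 1 = m + 1 by omega, pow_succ] at h
  omega

section

variable {S : Type*} [Semigroup S]

theorem IsLeftIdeal.union {I J : Set S} (hI : IsLeftIdeal S I) (hJ : IsLeftIdeal S J) :
    IsLeftIdeal S (I ∪ J) :=
  ⟨hI.1.mono subset_union_left, fun s x hx => hx.imp (hI.2 s x) (hJ.2 s x)⟩

theorem IsLeftIdeal.union_sUnion {J : Set S} (hJ : IsLeftIdeal S J) {𝒩 : Set (Set S)}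
    (h𝒩 : ∀ I ∈ 𝒩, IsLeftIdeal S I) : IsLeftIdeal S (J ∪ ⋃₀ 𝒩) := by
  refine ⟨hJ.1.mono subset_union_left, fun s x hx => hx.imp (hJ.2 s x) ?_⟩
  rintro ⟨I, hI, hxI⟩
  exact ⟨I, hI, (h𝒩 I hI).2 s x hxI⟩

namespace IsMinimalLeftIdeal

theorem subset_of_inter_nonempty {I J : Set S} (hI : IsMinimalLeftIdeal S I)
    (hJ : IsLeftIdeal S J) (h : (I ∩ J).Nonempty) : I ⊆ J := by
  have hIJ : IsLeftIdeal S (I ∩ J) := ⟨h, fun s x hx => ⟨hI.1.1.2 s x hx.1, hJ.2 s x hx.2⟩⟩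
  by_contra hIJ'
  exact hI.2 _ hIJ ⟨inter_subset_left, fun h' => hIJ' (h'.trans inter_subset_right)⟩

theorem eq_of_inter_nonempty {I J : Set S} (hI : IsMinimalLeftIdeal S I)
    (hJ : IsMinimalLeftIdeal S J) (h : (I ∩ J).Nonempty) : I = J :=
  (hI.subset_of_inter_nonempty hJ.1.1 h).antisymm
    (hJ.subset_of_inter_nonempty hI.1.1 (by rwa [inter_comm]))

theorem isMaximalLeftIdeal_compl {B : Set S} (hB : IsMinimalLeftIdeal S B)
    (hBc : IsLeftIdeal S Bᶜ) : IsMaximalLeftIdeal S Bᶜ := by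
  obtain ⟨b, hb⟩ := hB.1.1.1
  refine ⟨⟨hBc, fun h => (h ▸ mem_univ b : b ∈ Bᶜ) hb⟩, fun J hJ hBJ => hJ.2 ?_⟩
  obtain ⟨x, hxJ, hxB⟩ := exists_of_ssubset hBJ
  have hBJ' : B ⊆ J := hB.subset_of_inter_nonempty hJ.1 ⟨x, not_not.1 hxB, hxJ⟩
  exact eq_univ_of_forall fun y => (em (y ∈ B)).elim (fun hy => hBJ' hy) (fun hy => hBJ.1 hy)

end IsMinimalLeftIdeal

theorem IsMaximalLeftIdeal.union_eq_univ {U J : Set S} (hU : IsMaximalLeftIdeal S U)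
    (hJ : IsLeftIdeal S J) (hJU : ¬ J ⊆ U) : J ∪ U = univ := by
  by_contra h
  exact hU.2 _ ⟨hJ.union hU.1.1, h⟩
    ⟨subset_union_right, fun h' => hJU (subset_union_left.trans h')⟩

def minimalLeftIdeals (S : Type*) [Semigroup S] : Set (Set S) := {I | IsMinimalLeftIdeal S I}

theorem setOf_isMinimalLeftIdeal :
    {I : Set S | IsMinimalLeftIdeal S I} = minimalLeftIdeals S :=
  rfl

theorem isLeftIdeal_sUnion_minimalLeftIdeals [Nonempty (minimalLeftIdeals S)] :
    IsLeftIdeal S (⋃₀ minimalLeftIdeals S) := by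
  obtain ⟨I, hI⟩ := ‹Nonempty (minimalLeftIdeals S)›
  obtain ⟨x, hx⟩ := hI.1.1.1
  exact ⟨⟨x, I, hI, hx⟩, fun s x ⟨J, hJ, hxJ⟩ => ⟨J, hJ, hJ.1.1.2 s x hxJ⟩⟩

theorem exists_isMaximalLeftIdeal_compl_of_not_subset
    (hUmax : IsMaximalLeftIdeal S (⋃₀ minimalLeftIdeals S)) {J : Set S}
    (hJ : IsNontrivialLeftIdeal S J) (hJU : ¬ J ⊆ ⋃₀ minimalLeftIdeals S) :
    ∃ B ∈ minimalLeftIdeals S, IsMaximalLeftIdeal S Bᶜ := by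
  have hJU' := hUmax.union_eq_univ hJ.1 hJU
  obtain ⟨B, hB, hJB⟩ : ∃ B ∈ minimalLeftIdeals S, Disjoint J B := by
    by_contra! h
    refine hJ.2 (eq_univ_of_univ_subset (hJU' ▸ union_subset subset_rfl ?_))
    exact sUnion_subset fun B hB => (hB : IsMinimalLeftIdeal S B).subset_of_inter_nonempty hJ.1
      (by rw [inter_comm]; exact not_disjoint_iff_nonempty_inter.1 (h B hB))
  have hBc : Bᶜ = J ∪ ⋃₀ (minimalLeftIdeals S \ {B}) := by
    ext x
    refine ⟨fun hxB => ?_, ?_⟩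
    · rcases (hJU' ▸ mem_univ x : x ∈ J ∪ ⋃₀ minimalLeftIdeals S) with hxJ | ⟨I, hI, hxI⟩
      · exact Or.inl hxJ
      · exact Or.inr ⟨I, ⟨hI, fun hIB => hxB ((mem_singleton_iff.1 hIB) ▸ hxI)⟩, hxI⟩
    · rintro (hxJ | ⟨I, ⟨hI, hIB⟩, hxI⟩) hxB
      · exact hJB.notMem_of_mem_left hxJ hxB
      · exact hIB ((hI : IsMinimalLeftIdeal S I).eq_of_inter_nonempty hB ⟨x, hxI, hxB⟩)
  exact ⟨B, hB, hB.isMaximalLeftIdeal_compl (hBc ▸ hJ.1.union_sUnion fun I hI => hI.1.1.1)⟩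

theorem forall_subset_sUnion_and_ne_univ_iff [Nonempty (minimalLeftIdeals S)] :
    ((∀ J, IsNontrivialLeftIdeal S J → J ⊆ ⋃₀ minimalLeftIdeals S) ∧
        ⋃₀ minimalLeftIdeals S ≠ univ) ↔
      IsMaximalLeftIdeal S (⋃₀ minimalLeftIdeals S) ∧
        ∀ K, IsMaximalLeftIdeal S K → K = ⋃₀ minimalLeftIdeals S := by
  constructor
  · rintro ⟨hP, hU⟩
    have hUnt := (⟨isLeftIdeal_sUnion_minimalLeftIdeals, hU⟩ :
      IsNontrivialLeftIdeal S (⋃₀ minimalLeftIdeals S))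
    refine ⟨⟨hUnt, fun J hJ hUJ => hUJ.2 (hP J hJ)⟩, fun K hK => ?_⟩
    by_contra hKU
    exact hK.2 _ hUnt ((hP K hK.1).ssubset_of_ne hKU)
  · rintro ⟨hUmax, huniq⟩
    refine ⟨fun J hJ => by_contra fun hJU => ?_, hUmax.1.2⟩
    obtain ⟨B, hB, hBmax⟩ := exists_isMaximalLeftIdeal_compl_of_not_subset hUmax hJ hJU
    obtain ⟨x, hx⟩ := (hB : IsMinimalLeftIdeal S B).1.1.1
    exact (huniq _ hBmax ▸ ⟨B, hB, hx⟩ : x ∈ Bᶜ) hx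

def minimalUnion (T : Finset (minimalLeftIdeals S)) : Set S := ⋃ i ∈ T, (i : Set S)

section minimalUnion

variable {T T' : Finset (minimalLeftIdeals S)}

theorem mem_minimalUnion {x : S} : x ∈ minimalUnion T ↔ ∃ i ∈ T, x ∈ (i : Set S) := by
  simp [minimalUnion]

theorem minimalUnion_subset_sUnion : minimalUnion T ⊆ ⋃₀ minimalLeftIdeals S := by
  intro x hx
  obtain ⟨i, -, hi⟩ := mem_minimalUnion.1 hx
  exact ⟨i, i.2, hi⟩

theorem minimalUnion_univ [Fintype (minimalLeftIdeals S)] :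
    minimalUnion (Finset.univ : Finset (minimalLeftIdeals S)) = ⋃₀ minimalLeftIdeals S := by
  ext x
  rw [mem_minimalUnion]
  exact ⟨fun ⟨i, _, hxi⟩ => ⟨i, i.2, hxi⟩, fun ⟨I, hI, hxI⟩ => ⟨⟨I, hI⟩, Finset.mem_univ _, hxI⟩⟩

theorem minimalUnion_ne_univ (hU : ⋃₀ minimalLeftIdeals S ≠ univ) : minimalUnion T ≠ univ :=
  fun hT => hU (eq_univ_of_univ_subset (hT ▸ minimalUnion_subset_sUnion))

theorem inter_minimalUnion_nonempty_iff {i : minimalLeftIdeals S} :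
    ((i : Set S) ∩ minimalUnion T).Nonempty ↔ i ∈ T := by
  refine ⟨fun ⟨x, hxi, hxT⟩ => ?_, fun hi => ?_⟩
  · obtain ⟨j, hj, hxj⟩ := mem_minimalUnion.1 hxT
    rwa [Subtype.ext (i.2.eq_of_inter_nonempty j.2 ⟨x, hxi, hxj⟩)]
  · obtain ⟨x, hx⟩ := i.2.1.1.1
    exact ⟨x, hx, mem_minimalUnion.2 ⟨i, hi, hx⟩⟩

theorem minimalUnion_injective : Function.Injective (minimalUnion (S := S)) := by
  intro T T' h
  ext i
  rw [← inter_minimalUnion_nonempty_iff, h, inter_minimalUnion_nonempty_iff]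

theorem minimalUnion_inter_nonempty_iff :
    (minimalUnion T ∩ minimalUnion T').Nonempty ↔ ¬ Disjoint T T' := by
  rw [Finset.not_disjoint_iff]
  constructor
  · rintro ⟨x, hx, hx'⟩
    obtain ⟨i, hi, hxi⟩ := mem_minimalUnion.1 hx
    exact ⟨i, hi, inter_minimalUnion_nonempty_iff.1 ⟨x, hxi, hx'⟩⟩
  · rintro ⟨i, hi, hi'⟩
    obtain ⟨x, hxi, hx'⟩ := inter_minimalUnion_nonempty_iff.2 hi'
    exact ⟨x, mem_minimalUnion.2 ⟨i, hi, hxi⟩, hx'⟩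

theorem mul_mem_minimalUnion (s : S) {x : S} (hx : x ∈ minimalUnion T) :
    s * x ∈ minimalUnion T := by
  obtain ⟨i, hi, hxi⟩ := mem_minimalUnion.1 hx
  exact mem_minimalUnion.2 ⟨i, hi, i.2.1.1.2 s x hxi⟩

theorem isNontrivialLeftIdeal_minimalUnion (hT : T.Nonempty) (hTu : minimalUnion T ≠ univ) :
    IsNontrivialLeftIdeal S (minimalUnion T) := by
  refine ⟨⟨?_, fun s x => mul_mem_minimalUnion s⟩, hTu⟩
  obtain ⟨i, hi⟩ := hT
  obtain ⟨x, -, hx⟩ := inter_minimalUnion_nonempty_iff.2 hi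
  exact ⟨x, hx⟩

theorem exists_minimalUnion_eq [Fintype (minimalLeftIdeals S)] {J : Set S}
    (hJ : IsLeftIdeal S J) (hJU : J ⊆ ⋃₀ minimalLeftIdeals S) : ∃ T, minimalUnion T = J := by
  classical
  refine ⟨Finset.univ.filter fun i => ((i : Set S) ∩ J).Nonempty, Subset.antisymm ?_ ?_⟩
  · intro x hx
    obtain ⟨i, hi, hxi⟩ := mem_minimalUnion.1 hx
    exact i.2.subset_of_inter_nonempty hJ (Finset.mem_filter.1 hi).2 hxi
  · intro x hx
    obtain ⟨I, hI, hxI⟩ := hJU hx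
    exact mem_minimalUnion.2 ⟨⟨I, hI⟩, Finset.mem_filter.2 ⟨Finset.mem_univ _, x, hxI, hx⟩, hxI⟩

end minimalUnion

theorem Finset.exists_intersecting_card_eq_forall_mem {α : Type*} [Fintype α] [DecidableEq α]
    (a : α) : ∃ 𝒜 : Finset (Finset α), (𝒜 : Set (Finset α)).Intersecting ∧
      𝒜.card = 2 ^ (Fintype.card α - 1) ∧ ∀ s ∈ 𝒜, a ∈ s := by
  have : Nonempty α := ⟨a⟩
  have ha : (({{a}} : Finset (Finset α)) : Set (Finset α)).Intersecting := by
    rw [Finset.coe_singleton]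
    exact intersecting_singleton.2 (Finset.singleton_ne_empty a)
  obtain ⟨𝒜, ha𝒜, hcard, h𝒜⟩ := ha.exists_card_eq
  rw [Fintype.card_finset, ← mul_pow_sub_one Fintype.card_ne_zero] at hcard
  refine ⟨𝒜, h𝒜, by omega, fun s hs => ?_⟩
  have := h𝒜 (ha𝒜 (Finset.mem_singleton_self _)) hs
  rwa [Finset.disjoint_singleton_left, not_not] at this

theorem le_cliqueNumber {A : Set (Set S)} (hA : ∀ I ∈ A, IsNontrivialLeftIdeal S I)
    (hAA : A.Pairwise fun I J => (I ∩ J).Nonempty) : A.encard ≤ cliqueNumber S := by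
  refine le_sSup ⟨Subtype.val ⁻¹' A, fun v hv w hw hvw => ⟨hvw, hAA hv hw ?_⟩, ?_⟩
  · exact fun h => hvw (Subtype.ext h)
  · exact encard_preimage_of_injective_subset_range Subtype.val_injective
      (by rwa [Subtype.range_coe_subtype])

section intersectingFamily

variable {𝒯 : Set (Finset (minimalLeftIdeals S))}

theorem isNontrivialLeftIdeal_of_mem_image_minimalUnion (h𝒯 : 𝒯.Intersecting)
    (hne : ∀ T ∈ 𝒯, minimalUnion T ≠ univ) :
    ∀ I ∈ minimalUnion '' 𝒯, IsNontrivialLeftIdeal S I := by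
  rintro _ ⟨T, hT, rfl⟩
  exact isNontrivialLeftIdeal_minimalUnion
    (Finset.nonempty_iff_ne_empty.2 (h𝒯.ne_bot hT)) (hne T hT)

theorem pairwise_inter_nonempty_image_minimalUnion (h𝒯 : 𝒯.Intersecting) :
    (minimalUnion '' 𝒯).Pairwise fun I J => (I ∩ J).Nonempty :=
  Set.Pairwise.image fun _ hT _ hT' _ => minimalUnion_inter_nonempty_iff.2 (h𝒯 hT hT')

theorem encard_le_cliqueNumber (h𝒯 : 𝒯.Intersecting)
    (hne : ∀ T ∈ 𝒯, minimalUnion T ≠ univ) : 𝒯.encard ≤ cliqueNumber S := by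
  rw [← minimalUnion_injective.injOn.encard_image]
  exact le_cliqueNumber (isNontrivialLeftIdeal_of_mem_image_minimalUnion h𝒯 hne)
    (pairwise_inter_nonempty_image_minimalUnion h𝒯)

theorem encard_add_one_le_cliqueNumber (h𝒯 : 𝒯.Intersecting)
    (hne : ∀ T ∈ 𝒯, minimalUnion T ≠ univ) {K : Set S} (hK : IsNontrivialLeftIdeal S K)
    (hKU : ¬ K ⊆ ⋃₀ minimalLeftIdeals S) (hKT : ∀ T ∈ 𝒯, (K ∩ minimalUnion T).Nonempty) :
    𝒯.encard + 1 ≤ cliqueNumber S := by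
  have hK𝒯 : K ∉ minimalUnion '' 𝒯 := by
    rintro ⟨T, -, rfl⟩
    exact hKU minimalUnion_subset_sUnion
  rw [← minimalUnion_injective.injOn.encard_image, ← encard_insert_of_notMem hK𝒯]
  refine le_cliqueNumber ?_ ((pairwise_inter_nonempty_image_minimalUnion h𝒯).insert ?_)
  · rintro I (rfl | hI)
    exacts [hK, isNontrivialLeftIdeal_of_mem_image_minimalUnion h𝒯 hne I hI]
  · rintro _ ⟨T, hT, rfl⟩ -
    exact ⟨hKT T hT, by rw [inter_comm]; exact hKT T hT⟩

end intersectingFamily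

theorem exists_intersecting_card_eq_encard_of_isClique [Fintype (minimalLeftIdeals S)]
    (hP : ∀ J, IsNontrivialLeftIdeal S J → J ⊆ ⋃₀ minimalLeftIdeals S)
    {C : Set {I : Set S // IsNontrivialLeftIdeal S I}} (hC : (idealGraph S).IsClique C) :
    ∃ 𝒯 : Finset (Finset (minimalLeftIdeals S)),
      (𝒯 : Set (Finset (minimalLeftIdeals S))).Intersecting ∧
        (∀ T ∈ 𝒯, minimalUnion T ≠ univ) ∧ (𝒯.card : ℕ∞) = C.encard := by
  refine ⟨(toFinite (minimalUnion ⁻¹' (Subtype.val '' C))).toFinset, ?_, ?_, ?_⟩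
  · rw [Finite.coe_toFinset]
    rintro T ⟨v, hv, hvT⟩ T' ⟨w, hw, hwT⟩
    rw [← minimalUnion_inter_nonempty_iff, ← hvT, ← hwT]
    by_cases hvw : v = w
    · rw [hvw, inter_self]
      exact w.2.1.1
    · exact (hC hv hw hvw).2
  · rintro T hT
    obtain ⟨v, -, hvT⟩ := (Finite.mem_toFinset _).1 hT
    rw [← hvT]
    exact v.2.2
  · rw [← Finite.encard_eq_coe_toFinset_card,
      encard_preimage_of_injective_subset_range minimalUnion_injective,
      Subtype.val_injective.injOn.encard_image]
    rintro _ ⟨v, -, rfl⟩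
    exact exists_minimalUnion_eq v.2.1 (hP _ v.2)

section cliqueNumber

variable [Fintype (minimalLeftIdeals S)]

theorem cliqueNumber_le_two_pow [Nonempty (minimalLeftIdeals S)]
    (hP : ∀ J, IsNontrivialLeftIdeal S J → J ⊆ ⋃₀ minimalLeftIdeals S) :
    cliqueNumber S ≤ 2 ^ (Fintype.card (minimalLeftIdeals S) - 1) := by
  refine sSup_le ?_
  rintro _ ⟨C, hC, rfl⟩
  obtain ⟨𝒯, h𝒯, -, hcard⟩ := exists_intersecting_card_eq_encard_of_isClique hP hC
  have h2 := h𝒯.card_le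
  rw [Fintype.card_finset, ← mul_pow_sub_one Fintype.card_ne_zero] at h2
  rw [← hcard]
  exact_mod_cast (show 𝒯.card ≤ 2 ^ (Fintype.card (minimalLeftIdeals S) - 1) by omega)

theorem cliqueNumber_le_two_pow_sub_one [Nonempty (minimalLeftIdeals S)]
    (hU : ⋃₀ minimalLeftIdeals S = univ) :
    cliqueNumber S ≤ (2 ^ (Fintype.card (minimalLeftIdeals S) - 1) - 1 : ℕ) := by
  classical
  refine sSup_le ?_
  rintro _ ⟨C, hC, rfl⟩
  obtain ⟨𝒯, h𝒯, hne, hcard⟩ :=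
    exists_intersecting_card_eq_encard_of_isClique (fun J _ => hU ▸ subset_univ J) hC
  have huniv : Finset.univ ∉ 𝒯 := fun h => hne _ h (minimalUnion_univ.trans hU)
  have h𝒯' : ((insert Finset.univ 𝒯 : Finset _) :
      Set (Finset (minimalLeftIdeals S))).Intersecting := by
    rw [Finset.coe_insert]
    refine h𝒯.insert Finset.univ_nonempty.ne_empty fun T hT =>
      Finset.not_disjoint_iff_nonempty_inter.2 ?_
    rw [Finset.univ_inter]
    exact Finset.nonempty_iff_ne_empty.2 (h𝒯.ne_bot hT)
  have h2 := h𝒯'.card_le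
  rw [Finset.card_insert_of_notMem huniv, Fintype.card_finset,
    ← mul_pow_sub_one Fintype.card_ne_zero] at h2
  rw [← hcard]
  exact_mod_cast (show 𝒯.card ≤ 2 ^ (Fintype.card (minimalLeftIdeals S) - 1) - 1 by omega)

theorem two_pow_le_cliqueNumber [Nonempty (minimalLeftIdeals S)]
    (hU : ⋃₀ minimalLeftIdeals S ≠ univ) :
    2 ^ (Fintype.card (minimalLeftIdeals S) - 1) ≤ cliqueNumber S := by
  classical
  obtain ⟨c⟩ := ‹Nonempty (minimalLeftIdeals S)›
  obtain ⟨𝒜, h𝒜, hcard, -⟩ := Finset.exists_intersecting_card_eq_forall_mem c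
  have h := encard_le_cliqueNumber h𝒜 fun T _ => minimalUnion_ne_univ hU
  rwa [encard_coe_eq_coe_finsetCard, hcard, Nat.cast_pow, Nat.cast_ofNat] at h

theorem two_pow_sub_one_le_cliqueNumber [Nonempty (minimalLeftIdeals S)]
    (hU : ⋃₀ minimalLeftIdeals S = univ) :
    ((2 ^ (Fintype.card (minimalLeftIdeals S) - 1) - 1 : ℕ) : ℕ∞) ≤ cliqueNumber S := by
  classical
  obtain ⟨c⟩ := ‹Nonempty (minimalLeftIdeals S)›
  obtain ⟨𝒜, h𝒜, hcard, -⟩ := Finset.exists_intersecting_card_eq_forall_mem c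
  have h := encard_le_cliqueNumber
    (h𝒜.mono (Finset.coe_subset.2 (Finset.erase_subset Finset.univ 𝒜)))
    fun T hT hTU => (Finset.mem_erase.1 hT).1
      (minimalUnion_injective (hTU.trans (minimalUnion_univ.trans hU).symm))
  rw [encard_coe_eq_coe_finsetCard] at h
  exact le_trans (Nat.cast_le.2 (hcard ▸ Finset.pred_card_le_card_erase)) h

theorem two_pow_add_one_le_cliqueNumber (hn : 1 < Fintype.card (minimalLeftIdeals S))
    {J : Set S} (hJ : IsNontrivialLeftIdeal S J) (hJU : ¬ J ⊆ ⋃₀ minimalLeftIdeals S) :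
    2 ^ (Fintype.card (minimalLeftIdeals S) - 1) + 1 ≤ cliqueNumber S := by
  classical
  obtain ⟨c, K, hK, hKU, hcK⟩ : ∃ c : minimalLeftIdeals S, ∃ K, IsNontrivialLeftIdeal S K ∧
      ¬ K ⊆ ⋃₀ minimalLeftIdeals S ∧ ((c : Set S) ∩ K).Nonempty := by
    by_cases h : ∃ c : minimalLeftIdeals S, ((c : Set S) ∩ J).Nonempty
    · obtain ⟨c, hc⟩ := h
      exact ⟨c, J, hJ, hJU, hc⟩
    -- `J` misses every minimal left ideal, so `J ∪ a` misses `b`.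
    obtain ⟨a, b, hab⟩ := Fintype.exists_pair_of_one_lt_card hn
    obtain ⟨x, hx⟩ := a.2.1.1.1
    obtain ⟨y, hy⟩ := b.2.1.1.1
    refine ⟨a, J ∪ a, ⟨hJ.1.union a.2.1.1, fun hJa => ?_⟩,
      fun h' => hJU (subset_union_left.trans h'), x, hx, Or.inr hx⟩
    rcases (hJa ▸ mem_univ y : y ∈ J ∪ a) with hyJ | hya
    · exact h ⟨b, y, hy, hyJ⟩
    · exact hab (Subtype.ext (a.2.eq_of_inter_nonempty b.2 ⟨y, hya, hy⟩))
  have hU : ⋃₀ minimalLeftIdeals S ≠ univ := fun h => hJU (h ▸ subset_univ J)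
  obtain ⟨𝒜, h𝒜, hcard, hc𝒜⟩ := Finset.exists_intersecting_card_eq_forall_mem c
  obtain ⟨x, hxc, hxK⟩ := hcK
  have h := encard_add_one_le_cliqueNumber h𝒜 (fun T _ => minimalUnion_ne_univ hU) hK hKU
    fun T hT => ⟨x, hxK, mem_minimalUnion.2 ⟨c, hc𝒜 T hT, hxc⟩⟩
  rwa [encard_coe_eq_coe_finsetCard, hcard, Nat.cast_pow, Nat.cast_ofNat] at h

theorem cliqueNumber_eq_two_pow_sub_one [Nonempty (minimalLeftIdeals S)]
    (hU : ⋃₀ minimalLeftIdeals S = univ) :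
    cliqueNumber S = (2 ^ (Fintype.card (minimalLeftIdeals S) - 1) - 1 : ℕ) :=
  (cliqueNumber_le_two_pow_sub_one hU).antisymm (two_pow_sub_one_le_cliqueNumber hU)

theorem cliqueNumber_eq_two_pow [Nonempty (minimalLeftIdeals S)]
    (hP : ∀ J, IsNontrivialLeftIdeal S J → J ⊆ ⋃₀ minimalLeftIdeals S)
    (hU : ⋃₀ minimalLeftIdeals S ≠ univ) :
    cliqueNumber S = 2 ^ (Fintype.card (minimalLeftIdeals S) - 1) :=
  (cliqueNumber_le_two_pow hP).antisymm (two_pow_le_cliqueNumber hU)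

end cliqueNumber

end

/-- Let `S` have exactly `n` minimal left ideals, `2 ≤ n < ∞`. Then the clique number of
`Γ(S)` equals `n` iff either `n = 3` and `S` is the union of its three minimal left
ideals, or `n = 2` and the union of the two minimal left ideals is the unique maximal
left ideal of `S`. -/
theorem cliqueNumber_eq_iff (S : Type*) [Semigroup S] (n : ℕ) (hn : 2 ≤ n)
    (hcard : {I : Set S | IsMinimalLeftIdeal S I}.encard = n) :
    cliqueNumber S = n ↔
      ((n = 3 ∧ ⋃₀ {I : Set S | IsMinimalLeftIdeal S I} = Set.univ) ∨
        (n = 2 ∧ IsMaximalLeftIdeal S (⋃₀ {I : Set S | IsMinimalLeftIdeal S I}) ∧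
          ∀ K : Set S, IsMaximalLeftIdeal S K →
            K = ⋃₀ {I : Set S | IsMinimalLeftIdeal S I})) := by
  rw [setOf_isMinimalLeftIdeal] at hcard ⊢
  have := (finite_of_encard_eq_coe hcard).fintype
  have hn' : Fintype.card (minimalLeftIdeals S) = n := by
    rwa [encard_eq_coe_toFinset_card, toFinset_card, Nat.cast_inj] at hcard
  have : Nonempty (minimalLeftIdeals S) := Fintype.card_pos_iff.1 (by omega)
  by_cases hU : ⋃₀ minimalLeftIdeals S = univ
  · rw [cliqueNumber_eq_two_pow_sub_one hU, hn', Nat.cast_inj,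
      Nat.two_pow_pred_sub_one_eq_self_iff hn, or_iff_left fun h => h.2.1.1.2 hU,
      and_iff_left hU]
  rw [← forall_subset_sUnion_and_ne_univ_iff, and_iff_left hU, or_iff_right fun h => hU h.2]
  by_cases hP : ∀ J, IsNontrivialLeftIdeal S J → J ⊆ ⋃₀ minimalLeftIdeals S
  · rw [and_iff_left hP, cliqueNumber_eq_two_pow hP hU, hn']
    exact_mod_cast Nat.two_pow_pred_eq_self_iff hn
  obtain ⟨J, hJ, hJU⟩ := not_forall₂.1 hP
  refine iff_of_false (fun h => ?_) (fun h => hP h.2)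
  have := h ▸ hn' ▸ two_pow_add_one_le_cliqueNumber (by omega) hJ hJU
  norm_cast at this
  have := Nat.lt_two_pow_self (n := n - 1)
  omega
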